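/- For any two stochastic policies π and π' on a finite ergodic MDP, ρ(π') − ρ(π) ≥ E_{s∼d_π, a∼π'}[Ā^π(s,a)] − 2ξ·E_{s∼d_π}[D_TV(π'∥π)[s]] and ρ(π') − ρ(π) ≤ E_{s∼d_π, a∼π'}[Ā^π(s,a)] + 2ξ·E_{s∼d_π}[D_TV(π'∥π)[s]], where ξ = (κ* − 1)·max_s E_{a∼π'}|Ā^π(s,a)| and κ* is the maximal Kemeny constant over all stationary policies. -/

import Mathlib

open Finset

/-- A stochastic policy. -/
def IsPolicy {S A : Type*} [Fintype A] (π : S → A → ℝ) : Prop :=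
  (∀ s a, 0 ≤ π s a) ∧ ∀ s, ∑ a, π s a = 1

/-- State transition matrix induced by policy π. -/
def inducedMatrix {S A : Type*} [Fintype A] (P : S → A → S → ℝ) (π : S → A → ℝ) :
    Matrix S S ℝ :=
  Matrix.of fun s s' => ∑ a, π s a * P s a s'

/-- Fundamental matrix Z = (I − P_π + P*_π)⁻¹ where P*_π = 1 d_π^T. -/
noncomputable def fundMatrix {S : Type*} [Fintype S] [DecidableEq S]
    (Pm : Matrix S S ℝ) (d : S → ℝ) : Matrix S S ℝ :=
  (1 - Pm + Matrix.of fun _ s' => d s')⁻¹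

/-- Kemeny's constant κ^π = tr((I − P_π + P*_π)⁻¹). -/
noncomputable def kemeny {S : Type*} [Fintype S] [DecidableEq S]
    (Pm : Matrix S S ℝ) (d : S → ℝ) : ℝ :=
  (fundMatrix Pm d).trace

/-- Stationary distribution of the chain induced by a policy. -/
def IsStationaryDist {S A : Type*} [Fintype S] [Fintype A]
    (P : S → A → S → ℝ) (π : S → A → ℝ) (d : S → ℝ) : Prop :=
  (∀ s, 0 < d s) ∧ (∑ s, d s = 1) ∧
    ∀ s', ∑ s, d s * ∑ a, π s a * P s a s' = d s'

/-!
Write `P'` for the transition matrix of `π'`, `Z = (I - P' + 1 d_{π'}ᵀ)⁻¹` for its fundamental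
matrix and `g s = E_{a∼π'} Ā^π(s,a)`. The Bellman equation of `π` gives `ρ(π') - ρ(π) = d_{π'} ⬝ g`,
and `d_{π'} - d_π = x Z` for the zero-sum vector `x = d_π P' - d_π`, whose `ℓ¹`-norm is at most
`E_{s∼d_π} ∑_a |π' - π| = 2 E_{s∼d_π} D_TV`. So the error `ρ(π') - ρ(π) - d_π ⬝ g` is `x ⬝ Z g`,
at most `‖x‖₁` times half the oscillation of `Z g`. Each column of `Z` peaks on the diagonal
(a maximum principle) and each row sums to `1`, so `∑_j |Z i j - Z k j| ≤ 2 (tr Z - 1)`, and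
`tr Z = κ^{π'} ≤ κ*`.
-/

open Matrix

lemma abs_dotProduct_le_of_sum_eq_zero {ι : Type*} [Fintype ι] {x w : ι → ℝ} {D : ℝ}
    (hx : ∑ i, x i = 0) (hw : ∀ i k, |w i - w k| ≤ D) :
    |x ⬝ᵥ w| ≤ (∑ i, |x i|) * (D / 2) := by
  rcases isEmpty_or_nonempty ι with hι | hι
  · simp
  obtain ⟨imax, -, hmax⟩ := exists_max_image univ w univ_nonempty
  obtain ⟨imin, -, hmin⟩ := exists_min_image univ w univ_nonempty
  -- since `∑ x = 0`, `w` may be recentred at the midpoint of its range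
  have hcenter (i : ι) : |w i - (w imax + w imin) / 2| ≤ D / 2 := by
    have := (le_abs_self _).trans (hw imax imin)
    rw [abs_le]
    constructor <;> linarith [hmax i (mem_univ i), hmin i (mem_univ i)]
  calc |x ⬝ᵥ w| = |∑ i, x i * (w i - (w imax + w imin) / 2)| := by
        simp [dotProduct, mul_sub, sum_sub_distrib, ← sum_mul, hx]
    _ ≤ ∑ i, |x i| * (D / 2) :=
        (abs_sum_le_sum_abs _ _).trans <| sum_le_sum fun i _ => by
          rw [abs_mul]; exact mul_le_mul_of_nonneg_left (hcenter i) (abs_nonneg _)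
    _ = (∑ i, |x i|) * (D / 2) := (sum_mul ..).symm

section FundamentalMatrix

variable {S : Type*} [Fintype S] [DecidableEq S] {Pm : Matrix S S ℝ} {d : S → ℝ}

lemma vecMul_one_sub_add_replicateRow (v : S → ℝ) :
    v ᵥ* (1 - Pm + of fun _ s' => d s') = v - v ᵥ* Pm + (∑ i, v i) • d := by
  rw [vecMul_add, vecMul_sub, vecMul_one]
  ext j
  simp [vecMul, dotProduct, sum_mul]

lemma one_sub_add_replicateRow_mulVec_one (hP : Pm ∈ rowStochastic ℝ S) (hd1 : ∑ i, d i = 1) :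
    (1 - Pm + of fun _ s' => d s') *ᵥ 1 = 1 := by
  rw [add_mulVec, sub_mulVec, one_mulVec, one_vecMul_of_mem_rowStochastic hP, sub_self, zero_add]
  ext i
  simp [mulVec, dotProduct, hd1]

variable (hN : IsUnit (1 - Pm + of fun _ s' => d s'))
include hN

lemma vecMul_fundMatrix_of_vecMul (v : S → ℝ) :
    (v ᵥ* (1 - Pm + of fun _ s' => d s')) ᵥ* fundMatrix Pm d = v := by
  rw [fundMatrix, vecMul_vecMul, mul_nonsing_inv _ ((isUnit_iff_isUnit_det _).1 hN), vecMul_one]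

lemma fundMatrix_mulVec_one (hP : Pm ∈ rowStochastic ℝ S) (hd1 : ∑ i, d i = 1) :
    fundMatrix Pm d *ᵥ 1 = 1 := by
  conv_lhs => rw [← one_sub_add_replicateRow_mulVec_one hP hd1]
  rw [fundMatrix, mulVec_mulVec, nonsing_inv_mul _ ((isUnit_iff_isUnit_det _).1 hN), one_mulVec]

lemma vecMul_fundMatrix_self (hd : d ᵥ* Pm = d) (hd1 : ∑ i, d i = 1) :
    d ᵥ* fundMatrix Pm d = d := by
  have h := vecMul_fundMatrix_of_vecMul hN d
  rwa [vecMul_one_sub_add_replicateRow, hd, hd1, sub_self, zero_add, one_smul] at h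

lemma sub_eq_vecMul_fundMatrix (hd : d ᵥ* Pm = d) (hd1 : ∑ i, d i = 1) {v : S → ℝ}
    (hv1 : ∑ i, v i = 1) : d - v = (v ᵥ* Pm - v) ᵥ* fundMatrix Pm d := by
  conv_lhs => rw [← vecMul_fundMatrix_of_vecMul hN (d - v)]
  congr 1
  rw [vecMul_one_sub_add_replicateRow, sub_vecMul, hd]
  simp [sum_sub_distrib, hd1, hv1]

lemma fundMatrix_eq_one_sub_add_mul (hd : d ᵥ* Pm = d) (hd1 : ∑ i, d i = 1) :
    fundMatrix Pm d = 1 - (of fun _ s' => d s' : Matrix S S ℝ) + Pm * fundMatrix Pm d := by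
  have hNZ := mul_nonsing_inv _ ((isUnit_iff_isUnit_det _).1 hN)
  rw [add_mul, sub_mul, one_mul, ← fundMatrix] at hNZ
  have hcol : (of fun _ s' => d s' : Matrix S S ℝ) * fundMatrix Pm d = of fun _ s' => d s' := by
    ext i j
    exact congrFun (vecMul_fundMatrix_self hN hd hd1) j
  rw [← hNZ, hcol]
  abel

variable (hP : Pm ∈ rowStochastic ℝ S)
  (hd : d ᵥ* Pm = d) (hd1 : ∑ i, d i = 1) (hd0 : ∀ j, 0 < d j)
include hP hd hd1 hd0

lemma fundMatrix_apply_le_diag (i j : S) : fundMatrix Pm d i j ≤ fundMatrix Pm d j j := by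
  set Z := fundMatrix Pm d
  -- In a row `i₀` maximising column `j`, the row of `Z = 1 - 1 dᵀ + Pm Z` averages column `j`
  -- and subtracts `d j > 0`, which is impossible unless the `1` from the identity is there.
  obtain ⟨i₀, -, hi₀⟩ := exists_max_image univ (fun k => Z k j) ⟨i, mem_univ i⟩
  refine (hi₀ i (mem_univ i)).trans ?_
  rcases eq_or_ne i₀ j with rfl | hne
  · exact le_rfl
  have hmean : ∑ k, Pm i₀ k * Z k j ≤ Z i₀ j :=
    calc ∑ k, Pm i₀ k * Z k j ≤ ∑ k, Pm i₀ k * Z i₀ j :=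
          sum_le_sum fun k _ => mul_le_mul_of_nonneg_left (hi₀ k (mem_univ k)) (hP.1 _ _)
      _ = Z i₀ j := by rw [← sum_mul, sum_row_of_mem_rowStochastic hP, one_mul]
  have h := congrFun₂ (fundMatrix_eq_one_sub_add_mul hN hd hd1) i₀ j
  simp only [Matrix.add_apply, Matrix.sub_apply, one_apply_ne hne, of_apply, mul_apply] at h
  linarith [hd0 j]

lemma one_le_trace_fundMatrix : 1 ≤ (fundMatrix Pm d).trace := by
  set Z := fundMatrix Pm d
  calc 1 = ∑ j, ∑ i, d i * Z i j := by
        rw [← hd1]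
        exact sum_congr rfl fun j _ => (congrFun (vecMul_fundMatrix_self hN hd hd1) j).symm
    _ ≤ ∑ j, ∑ i, d i * Z j j := by
        refine sum_le_sum fun j _ => sum_le_sum fun i _ => ?_
        exact mul_le_mul_of_nonneg_left
          (fundMatrix_apply_le_diag hN hP hd hd1 hd0 i j) (hd0 i).le
    _ = Z.trace := by simp [← sum_mul, hd1, trace]

lemma sum_abs_fundMatrix_sub_le (i k : S) :
    ∑ j, |fundMatrix Pm d i j - fundMatrix Pm d k j| ≤ 2 * ((fundMatrix Pm d).trace - 1) := by
  set Z := fundMatrix Pm d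
  have hrow (i : S) : ∑ j, Z i j = 1 := by
    simpa [mulVec, dotProduct] using congrFun (fundMatrix_mulVec_one hN hP hd1) i
  have hle := fundMatrix_apply_le_diag hN hP hd hd1 hd0
  calc ∑ j, |Z i j - Z k j| ≤ ∑ j, ((Z j j - Z i j) + (Z j j - Z k j)) :=
        sum_le_sum fun j _ => abs_sub_le_iff.2
          ⟨by linarith [hle i j, hle k j], by linarith [hle i j, hle k j]⟩
    _ = 2 * (Z.trace - 1) := by
        simp only [sum_add_distrib, sum_sub_distrib, hrow, trace, Matrix.diag]
        ring

lemma abs_fundMatrix_mulVec_sub_le {g : S → ℝ} {c : ℝ} (hg : ∀ j, |g j| ≤ c) (i k : S) :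
    |(fundMatrix Pm d *ᵥ g) i - (fundMatrix Pm d *ᵥ g) k|
      ≤ 2 * ((fundMatrix Pm d).trace - 1) * c := by
  set Z := fundMatrix Pm d
  have hc : 0 ≤ c := (abs_nonneg _).trans (hg i)
  calc |(Z *ᵥ g) i - (Z *ᵥ g) k| = |∑ j, (Z i j - Z k j) * g j| := by
        simp [mulVec, dotProduct, sub_mul, sum_sub_distrib]
    _ ≤ ∑ j, |Z i j - Z k j| * c :=
        (abs_sum_le_sum_abs _ _).trans <| sum_le_sum fun j _ => by
          rw [abs_mul]; exact mul_le_mul_of_nonneg_left (hg j) (abs_nonneg _)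
    _ ≤ 2 * (Z.trace - 1) * c := by
        rw [← sum_mul]
        exact mul_le_mul_of_nonneg_right (sum_abs_fundMatrix_sub_le hN hP hd hd1 hd0 i k) hc

end FundamentalMatrix

section MarkovDecisionProcess

variable {S A : Type*} [Fintype S] [Fintype A] {P : S → A → S → ℝ}

lemma inducedMatrix_mem_rowStochastic [DecidableEq S] (hP_nonneg : ∀ s a s', 0 ≤ P s a s')
    (hP_sum : ∀ s a, ∑ s', P s a s' = 1) {π : S → A → ℝ} (hπ : IsPolicy π) :
    inducedMatrix P π ∈ rowStochastic ℝ S := by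
  refine mem_rowStochastic_iff_sum.2
    ⟨fun s s' => sum_nonneg fun a _ => mul_nonneg (hπ.1 s a) (hP_nonneg s a s'), fun s => ?_⟩
  simp only [inducedMatrix, of_apply]
  rw [sum_comm]
  simp [← mul_sum, hP_sum, hπ.2]

lemma IsStationaryDist.vecMul_inducedMatrix {π : S → A → ℝ} {d : S → ℝ}
    (hd : IsStationaryDist P π d) : d ᵥ* inducedMatrix P π = d :=
  funext hd.2.2

lemma sum_abs_vecMul_inducedMatrix_sub_le (hP_nonneg : ∀ s a s', 0 ≤ P s a s')
    (hP_sum : ∀ s a, ∑ s', P s a s' = 1) (π π' : S → A → ℝ) {d : S → ℝ} (hd0 : ∀ s, 0 ≤ d s) :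
    ∑ s', |(d ᵥ* inducedMatrix P π' - d ᵥ* inducedMatrix P π) s'|
      ≤ ∑ s, d s * ∑ a, |π' s a - π s a| := by
  have hentry (s' : S) : (d ᵥ* inducedMatrix P π' - d ᵥ* inducedMatrix P π) s'
      = ∑ s, d s * ∑ a, (π' s a - π s a) * P s a s' := by
    simp [vecMul, dotProduct, inducedMatrix, ← sum_sub_distrib, ← mul_sub, sub_mul]
  calc ∑ s', |(d ᵥ* inducedMatrix P π' - d ᵥ* inducedMatrix P π) s'|
      ≤ ∑ s', ∑ s, d s * ∑ a, |π' s a - π s a| * P s a s' := by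
        refine sum_le_sum fun s' _ => ?_
        rw [hentry]
        refine (abs_sum_le_sum_abs _ _).trans (sum_le_sum fun s _ => ?_)
        rw [abs_mul, abs_of_nonneg (hd0 s)]
        refine mul_le_mul_of_nonneg_left ((abs_sum_le_sum_abs _ _).trans_eq ?_) (hd0 s)
        simp [abs_mul, abs_of_nonneg (hP_nonneg _ _ s')]
    _ = ∑ s, d s * ∑ a, |π' s a - π s a| := by
        rw [sum_comm]
        refine sum_congr rfl fun s _ => ?_
        rw [← mul_sum, sum_comm]
        simp [← mul_sum, hP_sum]

lemma performance_difference {r : S → A → ℝ} {π' : S → A → ℝ} (hπ' : IsPolicy π')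
    {d' : S → ℝ} (hd' : IsStationaryDist P π' d') {ρ ρ' : ℝ}
    (hρ' : ρ' = ∑ s, d' s * ∑ a, π' s a * r s a) {V : S → ℝ} {Adv : S → A → ℝ}
    (hAdv : ∀ s a, Adv s a = r s a - ρ + ∑ s', P s a s' * V s' - V s) :
    ρ' - ρ = ∑ s, d' s * ∑ a, π' s a * Adv s a := by
  have hg : (fun s => ∑ a, π' s a * Adv s a)
      = (fun s => ∑ a, π' s a * r s a) - Function.const S ρ + inducedMatrix P π' *ᵥ V - V := by
    ext s
    simp only [hAdv, mul_sub, mul_add, sum_sub_distrib, sum_add_distrib, ← sum_mul, hπ'.2 s]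
    simp [mulVec, dotProduct, inducedMatrix, mul_sum, sum_mul, mul_assoc, sum_comm (γ := A)]
  change ρ' - ρ = d' ⬝ᵥ fun s => ∑ a, π' s a * Adv s a
  rw [hg, dotProduct_sub, dotProduct_add, dotProduct_sub, dotProduct_mulVec,
    hd'.vecMul_inducedMatrix, hρ']
  simp [dotProduct, ← sum_mul, hd'.2.1]

lemma abs_avgReward_sub_sub_le_kemeny [DecidableEq S] [Nonempty S]
    (hP_nonneg : ∀ s a s', 0 ≤ P s a s') (hP_sum : ∀ s a, ∑ s', P s a s' = 1)
    {π π' : S → A → ℝ} (hπ' : IsPolicy π') {dπ dπ' : S → ℝ}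
    (hd : IsStationaryDist P π dπ) (hd' : IsStationaryDist P π' dπ')
    (hN : IsUnit (1 - inducedMatrix P π' + of fun _ s' => dπ' s'))
    {r : S → A → ℝ} {ρ ρ' : ℝ} (hρ' : ρ' = ∑ s, dπ' s * ∑ a, π' s a * r s a)
    {V : S → ℝ} {Adv : S → A → ℝ}
    (hAdv : ∀ s a, Adv s a = r s a - ρ + ∑ s', P s a s' * V s' - V s)
    {c : ℝ} (hc : ∀ s, |∑ a, π' s a * Adv s a| ≤ c) :
    |ρ' - ρ - ∑ s, dπ s * ∑ a, π' s a * Adv s a|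
      ≤ (kemeny (inducedMatrix P π') dπ' - 1) * c * ∑ s, dπ s * ∑ a, |π' s a - π s a| := by
  set P' := inducedMatrix P π'
  set Z := fundMatrix P' dπ'
  set g : S → ℝ := fun s => ∑ a, π' s a * Adv s a
  set x := dπ ᵥ* P' - dπ
  have hP' : P' ∈ rowStochastic ℝ S := inducedMatrix_mem_rowStochastic hP_nonneg hP_sum hπ'
  have hgap : ρ' - ρ - dπ ⬝ᵥ g = x ⬝ᵥ (Z *ᵥ g) := by
    rw [performance_difference hπ' hd' hρ' hAdv, dotProduct_mulVec,
      ← sub_eq_vecMul_fundMatrix hN hd'.vecMul_inducedMatrix hd'.2.1 hd.2.1, sub_dotProduct]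
    rfl
  have hx0 : ∑ s, x s = 0 := by
    have hd1 : dπ ⬝ᵥ 1 = 1 := by rw [dotProduct_one, hd.2.1]
    rw [← dotProduct_one, sub_dotProduct, vecMul_dotProduct_one_eq_one_rowStochastic hP' hd1, hd1,
      sub_self]
  have hx1 : ∑ s, |x s| ≤ ∑ s, dπ s * ∑ a, |π' s a - π s a| := by
    have h := sum_abs_vecMul_inducedMatrix_sub_le hP_nonneg hP_sum π π' fun s => (hd.1 s).le
    rwa [hd.vecMul_inducedMatrix] at h
  have hZ1 : 0 ≤ Z.trace - 1 :=
    sub_nonneg.2 (one_le_trace_fundMatrix hN hP' hd'.vecMul_inducedMatrix hd'.2.1 hd'.1)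
  have hc0 : 0 ≤ c := (abs_nonneg _).trans (hc (Classical.arbitrary S))
  change |ρ' - ρ - dπ ⬝ᵥ g| ≤ (Z.trace - 1) * c * _
  calc |ρ' - ρ - dπ ⬝ᵥ g| = |x ⬝ᵥ (Z *ᵥ g)| := by rw [hgap]
    _ ≤ (∑ s, |x s|) * (2 * (Z.trace - 1) * c / 2) := abs_dotProduct_le_of_sum_eq_zero hx0
        (abs_fundMatrix_mulVec_sub_le hN hP' hd'.vecMul_inducedMatrix hd'.2.1 hd'.1 hc)
    _ ≤ (∑ s, dπ s * ∑ a, |π' s a - π s a|) * ((Z.trace - 1) * c) := by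
        rw [show 2 * (Z.trace - 1) * c / 2 = (Z.trace - 1) * c by ring]
        exact mul_le_mul_of_nonneg_right hx1 (mul_nonneg hZ1 hc0)
    _ = (Z.trace - 1) * c * ∑ s, dπ s * ∑ a, |π' s a - π s a| := mul_comm _ _

end MarkovDecisionProcess

theorem avg_reward_policy_improvement_bound_general
    {S A : Type*} [Fintype S] [Fintype A] [DecidableEq S] [Nonempty S]
    (P : S → A → S → ℝ) (r : S → A → ℝ)
    (hP_nonneg : ∀ s a s', 0 ≤ P s a s') (hP_sum : ∀ s a, ∑ s', P s a s' = 1)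
    (π π' : S → A → ℝ) (hπ' : IsPolicy π')
    (dπ dπ' : S → ℝ)
    (hd : IsStationaryDist P π dπ) (hd' : IsStationaryDist P π' dπ')
    -- fundamental matrices exist (irreducible aperiodic chains)
    (hZ : ∀ p d, IsPolicy p → IsStationaryDist P p d →
      IsUnit (1 - inducedMatrix P p + Matrix.of fun _ s' => d s' : Matrix S S ℝ))
    -- average rewards
    (ρπ ρπ' : ℝ)
    (hρ' : ρπ' = ∑ s, dπ' s * ∑ a, π' s a * r s a)
    -- bias, action-bias and advantage functions of π
    (Vb : S → ℝ) (Qb Ab : S → A → ℝ)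
    (hBellman : ∀ s a, Qb s a = r s a - ρπ + ∑ s', P s a s' * Vb s')
    (hAdv : ∀ s a, Ab s a = Qb s a - Vb s)
    -- κ* = max_π κ^π, the maximal Kemeny constant over stationary policies
    (κstar : ℝ)
    (hκ_ub : ∀ p d, IsPolicy p → IsStationaryDist P p d →
      kemeny (inducedMatrix P p) d ≤ κstar)
    -- ξ = (κ* − 1)·max_s E_{a∼π'}|Ā^π(s,a)|
    (ξ : ℝ)
    (hξ : ξ = (κstar - 1) *
      Finset.univ.sup' Finset.univ_nonempty (fun s => ∑ a, π' s a * |Ab s a|)) :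
    ρπ' - ρπ ≥ (∑ s, dπ s * ∑ a, π' s a * Ab s a) -
        2 * ξ * ∑ s, dπ s * ((1 / 2) * ∑ a, |π' s a - π s a|) ∧
    ρπ' - ρπ ≤ (∑ s, dπ s * ∑ a, π' s a * Ab s a) +
        2 * ξ * ∑ s, dπ s * ((1 / 2) * ∑ a, |π' s a - π s a|) := by
  set M := univ.sup' univ_nonempty fun s => ∑ a, π' s a * |Ab s a|
  set X := ∑ s, dπ s * ∑ a, |π' s a - π s a|
  have hM (s : S) : |∑ a, π' s a * Ab s a| ≤ M := by
    refine (abs_sum_le_sum_abs _ _).trans (le_of_eq_of_le ?_ (le_sup' _ (mem_univ s)))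
    simp [abs_mul, abs_of_nonneg (hπ'.1 s _)]
  have hgap := abs_avgReward_sub_sub_le_kemeny hP_nonneg hP_sum hπ' hd hd' (hZ π' dπ' hπ' hd') hρ'
    (fun s a => by rw [hAdv, hBellman]) hM
  have hM0 : 0 ≤ M := (abs_nonneg _).trans (hM (Classical.arbitrary S))
  have hX0 : 0 ≤ X :=
    sum_nonneg fun s _ => mul_nonneg (hd.1 s).le (sum_nonneg fun a _ => abs_nonneg _)
  have hκ : (kemeny (inducedMatrix P π') dπ' - 1) * M * X ≤ ξ * X := by
    rw [hξ]
    gcongr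
    exact hκ_ub π' dπ' hπ' hd'
  have hTV : 2 * ξ * ∑ s, dπ s * ((1 / 2) * ∑ a, |π' s a - π s a|) = ξ * X := by
    rw [mul_sum, mul_sum]
    exact sum_congr rfl fun s _ => by ring
  rw [hTV]
  constructor <;> linarith [abs_le.1 (hgap.trans hκ)]

/-- the average-reward policy improvement bounds
  ρ(π') − ρ(π) ≥ E_{s∼d_π, a∼π'}[Ā^π(s,a)] − 2ξ·E_{s∼d_π}[D_TV(π'∥π)[s]] and
  ρ(π') − ρ(π) ≤ E_{s∼d_π, a∼π'}[Ā^π(s,a)] + 2ξ·E_{s∼d_π}[D_TV(π'∥π)[s]],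
with ξ = (κ* − 1)·max_s E_{a∼π'}|Ā^π(s,a)|. -/
theorem avg_reward_policy_improvement_bound
    {S A : Type*} [Fintype S] [Fintype A] [DecidableEq S] [Nonempty S]
    (P : S → A → S → ℝ) (r : S → A → ℝ)
    (hP_nonneg : ∀ s a s', 0 ≤ P s a s') (hP_sum : ∀ s a, ∑ s', P s a s' = 1)
    (π π' : S → A → ℝ) (hπ : IsPolicy π) (hπ' : IsPolicy π')
    (dπ dπ' : S → ℝ)
    (hd : IsStationaryDist P π dπ) (hd' : IsStationaryDist P π' dπ')
    -- fundamental matrices exist (irreducible aperiodic chains)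
    (hZ : ∀ p d, IsPolicy p → IsStationaryDist P p d →
      IsUnit (1 - inducedMatrix P p + Matrix.of fun _ s' => d s' : Matrix S S ℝ))
    -- average rewards
    (ρπ ρπ' : ℝ)
    (hρ : ρπ = ∑ s, dπ s * ∑ a, π s a * r s a)
    (hρ' : ρπ' = ∑ s, dπ' s * ∑ a, π' s a * r s a)
    -- bias, action-bias and advantage functions of π
    (Vb : S → ℝ) (Qb Ab : S → A → ℝ)
    (hBellman : ∀ s a, Qb s a = r s a - ρπ + ∑ s', P s a s' * Vb s')
    (hAdv : ∀ s a, Ab s a = Qb s a - Vb s)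
    -- κ* = max_π κ^π, the maximal Kemeny constant over stationary policies
    (κstar : ℝ)
    (hκ_ub : ∀ p d, IsPolicy p → IsStationaryDist P p d →
      kemeny (inducedMatrix P p) d ≤ κstar)
    (hκ_mem : ∃ p d, IsPolicy p ∧ IsStationaryDist P p d ∧
      kemeny (inducedMatrix P p) d = κstar)
    -- ξ = (κ* − 1)·max_s E_{a∼π'}|Ā^π(s,a)|
    (ξ : ℝ)
    (hξ : ξ = (κstar - 1) *
      Finset.univ.sup' Finset.univ_nonempty (fun s => ∑ a, π' s a * |Ab s a|)) :
    ρπ' - ρπ ≥ (∑ s, dπ s * ∑ a, π' s a * Ab s a) -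
        2 * ξ * ∑ s, dπ s * ((1 / 2) * ∑ a, |π' s a - π s a|) ∧
    ρπ' - ρπ ≤ (∑ s, dπ s * ∑ a, π' s a * Ab s a) +
        2 * ξ * ∑ s, dπ s * ((1 / 2) * ∑ a, |π' s a - π s a|) :=
  avg_reward_policy_improvement_bound_general P r hP_nonneg hP_sum π π' hπ' dπ dπ' hd hd' hZ ρπ ρπ'
    hρ' Vb Qb Ab hBellman hAdv κstar hκ_ub ξ hξ
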